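/- Let g : ℝ → ℝ be continuous, non-decreasing and everywhere positive, let C > 0, q ≥ 0, θ > 0 be constants, let p > 1, and assume τ = θ(q + 1/(p−1)). Let R ∈ (0,∞] and let v : [0,R) → ℝ solve the Cauchy problem (★) with v(0) = a. Then lim_{r→0⁺} (v'(r))^{p−1}/r = C^{p−1} · (g(a)/τ)^{(p−1)/θ}, and also the derivative of r ↦ (v'(r))^{p−1} tends to C^{p−1} · (g(a)/τ)^{(p−1)/θ} as r → 0⁺. -/

import Mathlib

open Real MeasureTheory Set Filter Topology ENNReal

/-- The right-hand side of the Cauchy problem (★):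
`C · r^{-q} · (∫_0^r s^{τ-1} g(v(s)) ds)^{1/θ}`. -/
noncomputable def cauchyRHS (C q τ θ : ℝ) (g v : ℝ → ℝ) (r : ℝ) : ℝ :=
  C * r ^ (-q) * (∫ s in (0:ℝ)..r, s ^ (τ - 1) * g (v s)) ^ (1 / θ)

/-- `v : ℝ → ℝ` solves the Cauchy problem (★) on `[0, R)` (with `R ∈ (0, ∞]` an
extended nonnegative real): `v` is continuous on `[0, R)`, `v 0 = a`, and at every
`r ∈ (0, R)` the derivative of `v` exists and is given by `cauchyRHS`. -/
def SolvesCauchy (C q τ θ a : ℝ) (g : ℝ → ℝ) (R : ℝ≥0∞) (v : ℝ → ℝ) : Prop :=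
  ContinuousOn v {r : ℝ | 0 ≤ r ∧ ENNReal.ofReal r < R} ∧
  v 0 = a ∧
  ∀ r : ℝ, 0 < r → ENNReal.ofReal r < R → HasDerivAt v (cauchyRHS C q τ θ g v r) r

/-- The Keller–Osserman condition:
`∫_b^∞ (∫_0^t g(s) ds)^{-1/(θ+1)} dt = +∞` for every `b > 0`. -/
def KellerOsserman (θ : ℝ) (g : ℝ → ℝ) : Prop :=
  ∀ b : ℝ, 0 < b →
    ∫⁻ t in Set.Ioi b, ENNReal.ofReal ((∫ s in (0:ℝ)..t, g s) ^ (-(1 / (θ + 1)))) = ⊤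

/-!
Write `F(r) = ∫_0^r s^{τ-1} g(v(s)) ds`. Since `g ∘ v` is continuous at `0` with value `g(a)`,
L'Hôpital's rule gives `F(r)/r^τ → g(a)/τ`. The choice of `τ` makes `τ(p-1)/θ = q(p-1) + 1`,
so `(v')^{p-1} = C^{p-1} r^{-q(p-1)} F^{(p-1)/θ} = C^{p-1} r (F/r^τ)^{(p-1)/θ}`, which gives the
first limit; differentiating the same expression and using `r F'(r) / r^τ = g(v(r))` gives the second.
-/

theorem ENNReal.exists_pos_forall_ofReal_lt {R : ℝ≥0∞} (hR : 0 < R) :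
    ∃ ε > 0, ∀ r < ε, ENNReal.ofReal r < R := by
  obtain ⟨ε, -, hε0, hεR⟩ := ENNReal.lt_iff_exists_real_btwn.1 hR
  exact ⟨ε, ENNReal.ofReal_pos.1 hε0, fun r hr => (ENNReal.ofReal_le_ofReal hr.le).trans_lt hεR⟩

theorem ContinuousOn.tendsto_nhdsGT_of_Ico {f : ℝ → ℝ} {a b : ℝ} (hab : a < b)
    (hf : ContinuousOn f (Ico a b)) : Tendsto f (𝓝[>] a) (𝓝 (f a)) :=
  (hf a ⟨le_rfl, hab⟩).tendsto.mono_left <| nhdsWithin_le_of_mem <|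
    mem_of_superset (Ioo_mem_nhdsGT hab) Ioo_subset_Ico_self

section WeightedPrimitive

variable {f : ℝ → ℝ} {ε τ : ℝ}

theorem intervalIntegrable_rpow_sub_one_mul (hτ : 0 < τ) (hf : ContinuousOn f (Ico 0 ε))
    {r : ℝ} (hr0 : 0 ≤ r) (hrε : r < ε) :
    IntervalIntegrable (fun s => s ^ (τ - 1) * f s) volume 0 r :=
  (intervalIntegral.intervalIntegrable_rpow' (by linarith)).mul_continuousOn
    (hf.mono <| by rw [uIcc_of_le hr0]; exact Icc_subset_Ico_right hrε)

theorem hasDerivAt_integral_rpow_sub_one_mul (hτ : 0 < τ) (hf : ContinuousOn f (Ico 0 ε))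
    {r : ℝ} (hr : r ∈ Ioo 0 ε) :
    HasDerivAt (fun x => ∫ s in (0:ℝ)..x, s ^ (τ - 1) * f s) (r ^ (τ - 1) * f r) r := by
  have hcont : ∀ x ∈ Ioo 0 ε, ContinuousAt (fun s => s ^ (τ - 1) * f s) x := fun x hx =>
    (continuousAt_rpow_const x _ (Or.inl hx.1.ne')).mul
      (hf.continuousAt (Ico_mem_nhds hx.1 hx.2))
  exact intervalIntegral.integral_hasDerivAt_right
    (intervalIntegrable_rpow_sub_one_mul hτ hf hr.1.le hr.2)
    (ContinuousAt.stronglyMeasurableAtFilter isOpen_Ioo hcont r hr) (hcont r hr)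

theorem tendsto_integral_rpow_sub_one_mul_div_rpow (hτ : 0 < τ) (hε : 0 < ε)
    (hf : ContinuousOn f (Ico 0 ε)) :
    Tendsto (fun r => (∫ s in (0:ℝ)..r, s ^ (τ - 1) * f s) / r ^ τ) (𝓝[>] 0)
      (𝓝 (f 0 / τ)) := by
  have hprim : Tendsto (fun r => ∫ s in (0:ℝ)..r, s ^ (τ - 1) * f s) (𝓝[>] 0) (𝓝 0) := by
    have hcont := intervalIntegral.continuousOn_primitive_interval'
      (intervalIntegrable_rpow_sub_one_mul hτ hf (half_pos hε).le (half_lt_self hε))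
      left_mem_uIcc
    rw [uIcc_of_le (half_pos hε).le] at hcont
    simpa using (hcont.mono Ico_subset_Icc_self).tendsto_nhdsGT_of_Ico (half_pos hε)
  have hpow : Tendsto (fun r : ℝ => r ^ τ) (𝓝[>] 0) (𝓝 0) :=
    ((continuous_rpow_const hτ.le).tendsto' 0 0 (zero_rpow hτ.ne')).mono_left
      nhdsWithin_le_nhds
  refine HasDerivAt.lhopital_zero_right_on_Ioo hε
    (fun r hr => hasDerivAt_integral_rpow_sub_one_mul hτ hf hr)
    (fun r hr => hasDerivAt_rpow_const (Or.inl hr.1.ne'))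
    (fun r hr => by have := rpow_pos_of_pos hr.1 (τ - 1); positivity) hprim hpow ?_
  refine ((hf.tendsto_nhdsGT_of_Ico hε).div_const τ).congr' ?_
  filter_upwards [self_mem_nhdsWithin] with r (hr : 0 < r)
  have := rpow_pos_of_pos hr (τ - 1)
  field_simp

end WeightedPrimitive

theorem cauchyRHS_rpow {C q τ θ r : ℝ} {g v : ℝ → ℝ} (β : ℝ) (hC : 0 ≤ C) (hr : 0 ≤ r)
    (hF : 0 ≤ ∫ s in (0:ℝ)..r, s ^ (τ - 1) * g (v s)) :
    cauchyRHS C q τ θ g v r ^ β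
      = C ^ β * (r ^ (-(q * β)) * (∫ s in (0:ℝ)..r, s ^ (τ - 1) * g (v s)) ^ (β / θ)) := by
  rw [cauchyRHS, mul_rpow (by positivity) (by positivity), mul_rpow hC (by positivity),
    ← rpow_mul hr, ← rpow_mul hF, neg_mul, one_div_mul_eq_div, mul_assoc]

section PowerOfRatio

variable {F : ℝ → ℝ} {τ κ α L : ℝ}

theorem rpow_neg_mul_rpow_eq_mul_rpow_div (hκ : τ * κ = α + 1) {r : ℝ} (hr : 0 < r)
    (hF : 0 ≤ F r) :
    r ^ (-α) * F r ^ κ = r * (F r / r ^ τ) ^ κ := by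
  rw [div_rpow hF (by positivity), ← rpow_mul hr.le, show -α = 1 - τ * κ by linarith,
    rpow_sub hr, Real.rpow_one]
  ring

theorem tendsto_rpow_neg_mul_rpow_div_self (hκ : τ * κ = α + 1)
    (hF : ∀ᶠ r in 𝓝[>] 0, 0 ≤ F r) (hlim : Tendsto (fun r => F r / r ^ τ) (𝓝[>] 0) (𝓝 L))
    (hL : 0 < L) :
    Tendsto (fun r => r ^ (-α) * F r ^ κ / r) (𝓝[>] 0) (𝓝 (L ^ κ)) := by
  refine ((continuousAt_rpow_const L κ (Or.inl hL.ne')).tendsto.comp hlim).congr' ?_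
  filter_upwards [hF, self_mem_nhdsWithin] with r hFr (hr : 0 < r)
  rw [rpow_neg_mul_rpow_eq_mul_rpow_div hκ hr hFr, mul_div_cancel_left₀ _ hr.ne']
  rfl

theorem tendsto_deriv_rpow_neg_mul_rpow {φ : ℝ → ℝ} {ε : ℝ} (hε : 0 < ε) (hκ : τ * κ = α + 1)
    (hF' : ∀ r ∈ Ioo 0 ε, HasDerivAt F (r ^ (τ - 1) * φ r) r)
    (hFpos : ∀ r ∈ Ioo 0 ε, 0 < F r)
    (hlim : Tendsto (fun r => F r / r ^ τ) (𝓝[>] 0) (𝓝 L)) (hL : 0 < L)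
    (hφ : Tendsto φ (𝓝[>] 0) (𝓝 (τ * L))) :
    Tendsto (deriv fun r => r ^ (-α) * F r ^ κ) (𝓝[>] 0) (𝓝 (L ^ κ)) := by
  have hderiv : ∀ r ∈ Ioo 0 ε, deriv (fun r => r ^ (-α) * F r ^ κ) r
      = -α * (F r / r ^ τ) ^ κ + κ * φ r * (F r / r ^ τ) ^ (κ - 1) := by
    intro r hr
    have hr0 : 0 < r := hr.1
    have hF0 := hFpos r hr
    rw [((hasDerivAt_rpow_const (Or.inl hr0.ne')).fun_mul
      ((hF' r hr).rpow_const (Or.inl hF0.ne'))).deriv,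
      div_rpow hF0.le (by positivity), div_rpow hF0.le (by positivity),
      ← rpow_mul hr0.le, ← rpow_mul hr0.le, mul_sub_one, hκ,
      rpow_sub_one hr0.ne' (-α), rpow_sub_one hr0.ne' τ, rpow_sub hr0, rpow_add_one hr0.ne',
      rpow_neg hr0.le]
    field_simp
  have hvalue : -α * L ^ κ + κ * (τ * L) * L ^ (κ - 1) = L ^ κ := by
    have hcancel : κ * (τ * L) * L ^ (κ - 1) = τ * κ * L ^ κ := by
      rw [rpow_sub_one hL.ne']
      field_simp
    rw [hcancel, hκ]
    ring
  have hcont : ContinuousAt (fun x : ℝ => x ^ κ) L := continuousAt_rpow_const L κ (Or.inl hL.ne')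
  have hcont' : ContinuousAt (fun x : ℝ => x ^ (κ - 1)) L :=
    continuousAt_rpow_const L _ (Or.inl hL.ne')
  rw [← hvalue]
  refine (((hcont.tendsto.comp hlim).const_mul (-α)).add
    ((hφ.const_mul κ).mul (hcont'.tendsto.comp hlim))).congr' ?_
  filter_upwards [Ioo_mem_nhdsGT hε] with r hr
  exact (hderiv r hr).symm

end PowerOfRatio

theorem deriv_pow_asymptotics_general
    (g : ℝ → ℝ) (hg_cont : Continuous g) (hg_pos : ∀ t, 0 < g t)
    (C q θ τ a : ℝ) (hC : 0 < C) (hq : 0 ≤ q) (hθ : 0 < θ)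
    (p : ℝ) (hp : 1 < p) (hτ : τ = θ * (q + 1 / (p - 1)))
    (R : ℝ≥0∞) (hR : 0 < R) (v : ℝ → ℝ)
    (hv : SolvesCauchy C q τ θ a g R v) :
    Tendsto (fun r => (deriv v r) ^ (p - 1) / r) (𝓝[>] 0)
      (𝓝 (C ^ (p - 1) * (g a / τ) ^ ((p - 1) / θ))) ∧
    Tendsto (fun r => deriv (fun x => (deriv v x) ^ (p - 1)) r) (𝓝[>] 0)
      (𝓝 (C ^ (p - 1) * (g a / τ) ^ ((p - 1) / θ))) := by
  obtain ⟨hvc, hv0, hvd⟩ := hv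
  obtain ⟨ε, hε, hεR⟩ := ENNReal.exists_pos_forall_ofReal_lt hR
  have hp1 : 0 < p - 1 := by linarith
  have hτ0 : 0 < τ := by rw [hτ]; positivity
  have hκ : τ * ((p - 1) / θ) = q * (p - 1) + 1 := by rw [hτ]; field_simp
  have hgv : ContinuousOn (fun s => g (v s)) (Ico 0 ε) :=
    hg_cont.comp_continuousOn (hvc.mono fun s hs => ⟨hs.1, hεR s hs.2⟩)
  set F := fun r => ∫ s in (0:ℝ)..r, s ^ (τ - 1) * g (v s)
  have hFpos : ∀ r ∈ Ioo 0 ε, 0 < F r := fun r hr =>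
    intervalIntegral.intervalIntegral_pos_of_pos_on
      (intervalIntegrable_rpow_sub_one_mul hτ0 hgv hr.1.le hr.2)
      (fun s hs => mul_pos (rpow_pos_of_pos hs.1 _) (hg_pos _)) hr.1
  have hL : 0 < g a / τ := div_pos (hg_pos a) hτ0
  have hlim : Tendsto (fun r => F r / r ^ τ) (𝓝[>] 0) (𝓝 (g a / τ)) :=
    hv0 ▸ tendsto_integral_rpow_sub_one_mul_div_rpow hτ0 hε hgv
  have hderiv_pow : ∀ r ∈ Ioo 0 ε,
      deriv v r ^ (p - 1) = C ^ (p - 1) * (r ^ (-(q * (p - 1))) * F r ^ ((p - 1) / θ)) :=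
    fun r hr => by
      rw [(hvd r hr.1 (hεR r hr.2)).deriv, cauchyRHS_rpow _ hC.le hr.1.le (hFpos r hr).le]
  have hIoo : Ioo 0 ε ∈ 𝓝[>] (0:ℝ) := Ioo_mem_nhdsGT hε
  constructor
  · refine ((tendsto_rpow_neg_mul_rpow_div_self hκ
      (mem_of_superset hIoo fun r hr => (hFpos r hr).le) hlim hL).const_mul _).congr' ?_
    filter_upwards [hIoo] with r hr
    rw [hderiv_pow r hr]
    ring
  · have hφ : Tendsto (fun r => g (v r)) (𝓝[>] 0) (𝓝 (τ * (g a / τ))) := by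
      rw [mul_div_cancel₀ _ hτ0.ne', ← hv0]
      exact hgv.tendsto_nhdsGT_of_Ico hε
    refine ((tendsto_deriv_rpow_neg_mul_rpow hε hκ
      (fun r hr => hasDerivAt_integral_rpow_sub_one_mul hτ0 hgv hr) hFpos hlim hL
      hφ).const_mul _).congr' ?_
    filter_upwards [hIoo] with r hr
    rw [← congrFun (deriv_const_mul_field' _) r]
    exact (Filter.eventuallyEq_of_mem (isOpen_Ioo.mem_nhds hr) hderiv_pow).deriv_eq.symm

/-- Lemma 2.2: if `τ = θ(q + 1/(p-1))` for some `p > 1`, then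
`(v'(r))^{p-1}/r → C^{p-1} (g(a)/τ)^{(p-1)/θ}` as `r → 0⁺`, and the derivative of
`r ↦ (v'(r))^{p-1}` tends to the same limit as `r → 0⁺`. -/
theorem deriv_pow_asymptotics
    (g : ℝ → ℝ) (hg_cont : Continuous g) (hg_mono : Monotone g) (hg_pos : ∀ t, 0 < g t)
    (C q θ τ a : ℝ) (hC : 0 < C) (hq : 0 ≤ q) (hθ : 0 < θ)
    (p : ℝ) (hp : 1 < p) (hτ : τ = θ * (q + 1 / (p - 1)))
    (R : ℝ≥0∞) (hR : 0 < R) (v : ℝ → ℝ)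
    (hv : SolvesCauchy C q τ θ a g R v) :
    Tendsto (fun r => (deriv v r) ^ (p - 1) / r) (𝓝[>] 0)
      (𝓝 (C ^ (p - 1) * (g a / τ) ^ ((p - 1) / θ))) ∧
    Tendsto (fun r => deriv (fun x => (deriv v x) ^ (p - 1)) r) (𝓝[>] 0)
      (𝓝 (C ^ (p - 1) * (g a / τ) ^ ((p - 1) / θ))) :=
  deriv_pow_asymptotics_general g hg_cont hg_pos C q θ τ a hC hq hθ p hp hτ R hR v hv
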